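/- Let G be a connected simple graph on a finite vertex set V and let P : V → Fin k (k ≥ 1) be a surjective map such that each cluster P⁻¹(r) induces a connected subgraph of G and every cross edge of G with respect to P is a bridge of G. Let {a,b} be an internal edge of some cluster r (P a = P b = r) that is not a bridge of G, and let G' be the graph obtained from G by deleting {a,b}. Let p : V → ℝ satisfy ∑_{v ∈ V} p v = 0, let θ : V → ℝ satisfy G.lapMatrix ℝ *ᵥ θ = p, and let θ' : V → ℝ satisfy G'.lapMatrix ℝ *ᵥ θ' = p. Then θ' u − θ' v = θ u − θ v for all u, v ∈ V with P u = P v ≠ r, and θ' c − θ' d = θ c − θ d for every cross edge {c,d} of G; that is, in a tree-partitioned network the failure of a non-bridge line changes the DC power flows only on lines inside the cluster where it occurred. -/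

import Mathlib

open Matrix

variable {V : Type*}

/-- The set of cross edges of `G` with respect to the partition map `P`:
edges of `G` whose two endpoints lie in different clusters. -/
def crossEdges {k : ℕ} (G : SimpleGraph V) (P : V → Fin k) : Set (Sym2 V) :=
  {e | e ∈ G.edgeSet ∧ ¬ (Sym2.map P e).IsDiag}

/-- The quotient (reduced) graph of `G` under `P`: vertices are the `k` clusters,
and distinct clusters `r`, `s` are adjacent iff `G` has a cross edge with one
endpoint in cluster `r` and the other in cluster `s`. -/
def quotientGraph {k : ℕ} (G : SimpleGraph V) (P : V → Fin k) : SimpleGraph (Fin k) where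
  Adj r s := r ≠ s ∧ ∃ u v, G.Adj u v ∧ P u = r ∧ P v = s
  symm := by
    constructor
    rintro r s ⟨hrs, u, v, huv, hu, hv⟩
    exact ⟨hrs.symm, v, u, huv.symm, hv, hu⟩
  loopless := by
    constructor
    rintro r ⟨hrr, -⟩
    exact hrr rfl

/-- `P` has no parallel cross edges: distinct cross edges of `G` join distinct
(unordered) pairs of clusters. -/
def NoParallelCrossEdges {k : ℕ} (G : SimpleGraph V) (P : V → Fin k) : Prop :=
  ∀ e₁ ∈ crossEdges G P, ∀ e₂ ∈ crossEdges G P, Sym2.map P e₁ = Sym2.map P e₂ → e₁ = e₂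

/-!
Cross edges are bridges, and the flow across a bridge `cd` equals the net injection on the side
of `c`, both in `G` and in `G - ab`, which still contains `cd`; so cross flows do not change.
Hence `δ = θ' - θ` agrees at the two ends of every cross edge, and it is harmonic for `G` away
from `a` and `b`. In a cluster `s ≠ r` it is therefore harmonic for the connected induced
subgraph, hence constant.
-/

open Finset

namespace SimpleGraph

variable {R : Type*}

theorem sum_sum_ite_adj_sub_eq_zero [AddCommGroup R] (H : SimpleGraph V) [DecidableRel H.Adj]
    (f : V → R) (S : Finset V) : ∑ w ∈ S, ∑ x ∈ S, (if H.Adj w x then f w - f x else 0) = 0 := by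
  have hsplit : ∀ w x, (if H.Adj w x then f w - f x else 0) =
      (if H.Adj w x then f w else 0) - (if H.Adj x w then f x else 0) := by
    intro w x
    simp only [adj_comm H x w]
    split_ifs <;> simp
  simp_rw [hsplit, sum_sub_distrib]
  rw [sum_comm (s := S) (t := S) (f := fun w x => if H.Adj x w then f x else 0), sub_self]

theorem IsBridge.eq_and_eq_of_adj_of_reachable_of_not_reachable {H : SimpleGraph V} {c d : V}
    (hbr : H.IsBridge s(c, d)) {w x : V} (hw : (H.deleteEdges {s(c, d)}).Reachable c w)
    (hx : ¬ (H.deleteEdges {s(c, d)}).Reachable c x) (hwx : H.Adj w x) : w = c ∧ x = d := by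
  by_cases he : s(w, x) = s(c, d)
  · rcases Sym2.eq_iff.mp he with ⟨rfl, rfl⟩ | ⟨rfl, rfl⟩
    · exact ⟨rfl, rfl⟩
    · exact absurd hw (isBridge_iff.mp hbr)
  · exact absurd (hw.trans (Adj.reachable (by simp [hwx, he]))) hx

variable [Fintype V] [DecidableEq V]

theorem lapMatrix_mulVec_apply_eq_sum_ite [NonAssocRing R] (H : SimpleGraph V)
    [DecidableRel H.Adj] (θ : V → R) (w : V) :
    (H.lapMatrix R *ᵥ θ) w = ∑ x, if H.Adj w x then θ w - θ x else 0 := by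
  rw [lapMatrix_mulVec_apply, ← sum_filter, ← neighborFinset_eq_filter, sum_sub_distrib,
    sum_const, card_neighborFinset_eq_degree, nsmul_eq_mul]

theorem lapMatrix_mulVec_apply_deleteEdges [NonAssocRing R] (H : SimpleGraph V)
    [DecidableRel H.Adj] {e : Sym2 V} [DecidableRel (H.deleteEdges {e}).Adj] {w : V} (hw : w ∉ e)
    (θ : V → R) : ((H.deleteEdges {e}).lapMatrix R *ᵥ θ) w = (H.lapMatrix R *ᵥ θ) w := by
  simp_rw [lapMatrix_mulVec_apply_eq_sum_ite, deleteEdges_adj, Set.mem_singleton_iff]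
  refine sum_congr rfl fun x _ => if_congr ?_ rfl rfl
  exact and_iff_left fun h => hw (h ▸ Sym2.mem_mk_left w x)

theorem sum_lapMatrix_mulVec_eq_sum_boundary [NonAssocRing R] (H : SimpleGraph V)
    [DecidableRel H.Adj] (θ : V → R) (S : Finset V) :
    ∑ w ∈ S, (H.lapMatrix R *ᵥ θ) w = ∑ w ∈ S, ∑ x ∈ Sᶜ, if H.Adj w x then θ w - θ x else 0 := by
  simp_rw [lapMatrix_mulVec_apply_eq_sum_ite, ← sum_add_sum_compl S, sum_add_distrib,
    sum_sum_ite_adj_sub_eq_zero, zero_add]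

/-- `S` is the side of `c` once the bridge is removed. -/
theorem IsBridge.exists_flow_eq_sum [NonAssocRing R] {H : SimpleGraph V} {c d : V}
    (hbr : H.IsBridge s(c, d)) :
    ∃ S : Finset V, ∀ (K : SimpleGraph V) [DecidableRel K.Adj], K ≤ H → K.Adj c d →
      ∀ θ : V → R, θ c - θ d = ∑ w ∈ S, (K.lapMatrix R *ᵥ θ) w := by
  classical
  let S : Finset V := {w | (H.deleteEdges {s(c, d)}).Reachable c w}
  have hc : c ∈ S := by simp [S]
  have hd : d ∈ Sᶜ := by simpa [S] using isBridge_iff.mp hbr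
  have hbd : ∀ w ∈ S, ∀ x ∈ Sᶜ, H.Adj w x → w = c ∧ x = d := fun w hw x hx hwx =>
    hbr.eq_and_eq_of_adj_of_reachable_of_not_reachable (by simpa [S] using hw)
      (by simpa [S] using hx) hwx
  refine ⟨S, fun K _ hKH hcd θ => ?_⟩
  rw [sum_lapMatrix_mulVec_eq_sum_boundary, sum_eq_single_of_mem c hc, sum_eq_single_of_mem d hd,
    if_pos hcd]
  · intro x hx hxd
    exact if_neg fun hcx => hxd (hbd c hc x hx (hKH hcx)).2
  · intro w hw hwc
    refine sum_eq_zero fun x hx => if_neg fun hwx => hwc (hbd w hw x hx (hKH hwx)).1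

theorem IsBridge.sub_eq_of_lapMatrix_deleteEdges [NonAssocRing R] {H : SimpleGraph V}
    [DecidableRel H.Adj] {c d : V} (hbr : H.IsBridge s(c, d)) (hcd : H.Adj c d) {e : Sym2 V}
    (he : s(c, d) ≠ e) [DecidableRel (H.deleteEdges {e}).Adj] {θ θ' p : V → R}
    (hθ : H.lapMatrix R *ᵥ θ = p) (hθ' : (H.deleteEdges {e}).lapMatrix R *ᵥ θ' = p) :
    θ' c - θ' d = θ c - θ d := by
  obtain ⟨S, hS⟩ := hbr.exists_flow_eq_sum (R := R)
  rw [hS H le_rfl hcd θ, hS (H.deleteEdges {e}) (deleteEdges_le _) (by simp [hcd, he]) θ', hθ,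
    hθ']

theorem eq_of_reachable_induce_of_lapMatrix_mulVec_eq_zero (H : SimpleGraph V)
    [DecidableRel H.Adj] {f : V → ℝ} {S : Set V}
    (hharm : ∀ w ∈ S, (H.lapMatrix ℝ *ᵥ f) w = 0)
    (hbd : ∀ w ∈ S, ∀ x ∉ S, H.Adj w x → f w = f x)
    {u v : S} (huv : (H.induce S).Reachable u v) : f u = f v := by
  classical
  refine ((H.induce S).lapMatrix_mulVec_eq_zero_iff_forall_reachable (x := fun w : S => f w)).mp
    ?_ u v huv
  ext w
  have hout : ∑ x ∈ S.toFinsetᶜ, (if H.Adj w x then f w - f x else 0) = 0 :=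
    sum_eq_zero fun x hx => by
      split_ifs with hwx
      · rw [hbd w w.2 x (by simpa using hx) hwx, sub_self]
      · rfl
  have hin := hharm w w.2
  rw [lapMatrix_mulVec_apply_eq_sum_ite, ← sum_add_sum_compl S.toFinset, hout, add_zero,
    ← sum_set_coe] at hin
  rw [lapMatrix_mulVec_apply_eq_sum_ite, Pi.zero_apply]
  exact hin

end SimpleGraph

open scoped Classical in
theorem tree_partition_localizes_line_failure_general [Fintype V] [DecidableEq V] {k : ℕ}
    (G : SimpleGraph V) [DecidableRel G.Adj]
    (P : V → Fin k)
    (hcl : ∀ s : Fin k, (G.induce (P ⁻¹' {s})).Connected)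
    (hbr : ∀ e ∈ crossEdges G P, G.IsBridge e)
    (r : Fin k) (a b : V) (ha : P a = r) (hb : P b = r)
    (p : V → ℝ)
    (θ : V → ℝ) (hθ : G.lapMatrix ℝ *ᵥ θ = p)
    (θ' : V → ℝ) (hθ' : (G.deleteEdges {s(a, b)}).lapMatrix ℝ *ᵥ θ' = p) :
    (∀ u v : V, P u = P v → P u ≠ r → θ' u - θ' v = θ u - θ v) ∧
      (∀ c d : V, G.Adj c d → P c ≠ P d → θ' c - θ' d = θ c - θ d) := by
  have hcross : ∀ c d : V, G.Adj c d → P c ≠ P d → θ' c - θ' d = θ c - θ d := by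
    intro c d hcd hPcd
    have hne : s(c, d) ≠ s(a, b) := by
      rw [Ne, Sym2.eq_iff]
      rintro (⟨rfl, rfl⟩ | ⟨rfl, rfl⟩) <;> simp_all
    exact (hbr _ ⟨hcd, by simpa using hPcd⟩).sub_eq_of_lapMatrix_deleteEdges hcd hne hθ hθ'
  refine ⟨fun u v huv hur => ?_, hcross⟩
  have hharm : ∀ w ∈ P ⁻¹' {P u}, (G.lapMatrix ℝ *ᵥ (θ' - θ)) w = 0 := by
    intro w hw
    have hab : w ∉ s(a, b) := by
      simp only [Sym2.mem_iff, Set.mem_preimage, Set.mem_singleton_iff] at hw ⊢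
      rintro (rfl | rfl) <;> simp_all
    rw [mulVec_sub, Pi.sub_apply, ← G.lapMatrix_mulVec_apply_deleteEdges hab, hθ', hθ, sub_self]
  have hbd : ∀ w ∈ P ⁻¹' {P u}, ∀ x ∉ P ⁻¹' {P u}, G.Adj w x → (θ' - θ) w = (θ' - θ) x :=
    fun w hw x hx hwx => by
      simp only [Pi.sub_apply]
      linarith [hcross w x hwx fun h => hx (h.symm.trans hw)]
  have hδ := G.eq_of_reachable_induce_of_lapMatrix_mulVec_eq_zero hharm hbd
    ((hcl (P u)).preconnected ⟨u, rfl⟩ ⟨v, huv.symm⟩)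
  simp only [Pi.sub_apply] at hδ
  linarith

open scoped Classical in
theorem tree_partition_localizes_line_failure [Fintype V] [DecidableEq V] {k : ℕ}
    (hk : 1 ≤ k) (G : SimpleGraph V) [DecidableRel G.Adj] (hG : G.Connected)
    (P : V → Fin k) (hsurj : Function.Surjective P)
    (hcl : ∀ s : Fin k, (G.induce (P ⁻¹' {s})).Connected)
    (hbr : ∀ e ∈ crossEdges G P, G.IsBridge e)
    (r : Fin k) (a b : V) (hab : G.Adj a b) (ha : P a = r) (hb : P b = r)
    (hnb : ¬ G.IsBridge s(a, b))
    (p : V → ℝ) (hp : ∑ v, p v = 0)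
    (θ : V → ℝ) (hθ : G.lapMatrix ℝ *ᵥ θ = p)
    (θ' : V → ℝ) (hθ' : (G.deleteEdges {s(a, b)}).lapMatrix ℝ *ᵥ θ' = p) :
    (∀ u v : V, P u = P v → P u ≠ r → θ' u - θ' v = θ u - θ v) ∧
      (∀ c d : V, G.Adj c d → P c ≠ P d → θ' c - θ' d = θ c - θ d) :=
  tree_partition_localizes_line_failure_general G P hcl hbr r a b ha hb p θ hθ θ' hθ'
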